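/- arXiv:2111.01062 — 2 statements merged into one kernel-verified Lean document; each statement's English description precedes it below -/
import Mathlib

section
/- For the zero potential, the following product formula holds for all z∈(ℂ\{0})^d and λ∈ℂ: 𝒫_0(z_1^{q_1},…,z_d^{q_d},λ) = det(A(z)−λI) = (−1)^Q ∏_{n∈W} ( Σ_{j=1}^d ( ρ^j_{n_j} z_j + 1/(ρ^j_{n_j} z_j) ) + λ ). -/
noncomputable section

/-- The discrete Laplacian on `ℤ^d`: `(Δu)(n) = Σ_{‖n'-n‖₁ = 1} u(n')`. -/
def discLap {d : ℕ} (u : (Fin d → ℤ) → ℂ) (n : Fin d → ℤ) : ℂ :=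
  ∑ j : Fin d, (u (Function.update n j (n j + 1)) + u (Function.update n j (n j - 1)))

/-- Reduction of an integer modulo `q`, as an element of `Fin q`. -/
def fem (q : ℕ+) (a : ℤ) : Fin (q : ℕ) :=
  ⟨(a % ((q : ℕ) : ℤ)).toNat, by
    have hq : (0:ℤ) < ((q : ℕ) : ℤ) := by exact_mod_cast q.pos
    have h1 : 0 ≤ a % ((q : ℕ) : ℤ) := Int.emod_nonneg a (ne_of_gt hq)
    have h2 : a % ((q : ℕ) : ℤ) < ((q : ℕ) : ℤ) := Int.emod_lt_of_pos a hq
    omega⟩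

/-- Extension of a function on the fundamental domain `W` to `ℤ^d` using the
Floquet boundary conditions `u(n + qⱼ eⱼ) = zⱼ u(n)`. -/
def extendBC {d : ℕ} (q : Fin d → ℕ+) (z : Fin d → ℂ)
    (u : (∀ j, Fin ((q j : ℕ))) → ℂ) : (Fin d → ℤ) → ℂ :=
  fun n => (∏ j, z j ^ (n j / ((q j : ℕ) : ℤ))) * u (fun j => fem (q j) (n j))

/-- The matrix `D_V(z)` of the Floquet reduction of `-Δ + V` to the fundamental domain. -/
def DVmat {d : ℕ} (q : Fin d → ℕ+) (V : (Fin d → ℤ) → ℂ) (z : Fin d → ℂ) :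
    Matrix (∀ j, Fin ((q j : ℕ))) (∀ j, Fin ((q j : ℕ))) ℂ :=
  fun n n' =>
    -(discLap (extendBC q z (Pi.single n' 1)) (fun j => ((n j : ℕ) : ℤ)))
      + V (fun j => ((n j : ℕ) : ℤ)) * (if n = n' then 1 else 0)

/-- `𝒫_V(z, λ) = det(D_V(z) - λ I)`. -/
def scriptP {d : ℕ} (q : Fin d → ℕ+) (V : (Fin d → ℤ) → ℂ) (z : Fin d → ℂ)
    (lam : ℂ) : ℂ :=
  Matrix.det (DVmat q V z - lam • (1 : Matrix (∀ j, Fin ((q j : ℕ))) (∀ j, Fin ((q j : ℕ))) ℂ))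

/-- `Γ`-periodicity for a complex-valued function on `ℤ^d`. -/
def IsPeriodic {d : ℕ} (q : Fin d → ℕ+) (V : (Fin d → ℤ) → ℂ) : Prop :=
  ∀ (n : Fin d → ℤ) (j : Fin d), V (Function.update n j (n j + ((q j : ℕ) : ℤ))) = V n

/-- `Γ`-periodicity for a real-valued function on `ℤ^d`. -/
def IsPeriodicR {d : ℕ} (q : Fin d → ℕ+) (V : (Fin d → ℤ) → ℝ) : Prop :=
  ∀ (n : Fin d → ℤ) (j : Fin d), V (Function.update n j (n j + ((q j : ℕ) : ℤ))) = V n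

/-- `ρ_m = e^{2πi m / q}`. -/
def rho (q : ℕ+) (m : ℕ) : ℂ :=
  Complex.exp (2 * (Real.pi : ℂ) * Complex.I * (m : ℂ) / ((q : ℕ) : ℂ))

/-- The discrete Fourier transform `V̂(l)` of a periodic potential. -/
def dft {d : ℕ} (q : Fin d → ℕ+) (V : (Fin d → ℤ) → ℂ) (l : Fin d → ℤ) : ℂ :=
  (1 / ((∏ j, (q j : ℕ) : ℕ) : ℂ)) * ∑ n : (∀ j, Fin ((q j : ℕ))),
    V (fun j => ((n j : ℕ) : ℤ)) *
      Complex.exp (-(2 * (Real.pi : ℂ) * Complex.I) * ∑ j, (l j : ℂ) * ((n j : ℕ) : ℂ) / ((q j : ℕ) : ℂ))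

/-- The diagonal matrix `A(z)` with entries `-Σⱼ (ρʲ_{nⱼ} zⱼ + 1/(ρʲ_{nⱼ} zⱼ))`. -/
def Amat {d : ℕ} (q : Fin d → ℕ+) (z : Fin d → ℂ) :
    Matrix (∀ j, Fin ((q j : ℕ))) (∀ j, Fin ((q j : ℕ))) ℂ :=
  Matrix.diagonal fun n => -(∑ j, (rho (q j) (n j) * z j + (rho (q j) (n j) * z j)⁻¹))

/-- The matrix `B_V` with entries `V̂(n - n')`. -/
def Bmat {d : ℕ} (q : Fin d → ℕ+) (V : (Fin d → ℤ) → ℂ) :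
    Matrix (∀ j, Fin ((q j : ℕ))) (∀ j, Fin ((q j : ℕ))) ℂ :=
  fun n n' => dft q V (fun j => ((n j : ℕ) : ℤ) - ((n' j : ℕ) : ℤ))

/-- The average `[V]` of a periodic potential. -/
def avgPot {d : ℕ} (q : Fin d → ℕ+) (V : (Fin d → ℤ) → ℂ) : ℂ :=
  (1 / ((∏ j, (q j : ℕ) : ℕ) : ℂ)) * ∑ n : (∀ j, Fin ((q j : ℕ))), V (fun j => ((n j : ℕ) : ℤ))

/-- The Fermi variety `F_λ(V)`. -/
def FermiVariety {d : ℕ} (q : Fin d → ℕ+) (V : (Fin d → ℤ) → ℂ) (lam : ℂ) :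
    Set (Fin d → ℂ) :=
  {k | ∃ u : (Fin d → ℤ) → ℂ, u ≠ 0 ∧
    (∀ n, -(discLap u n) + V n * u n = lam * u n) ∧
    (∀ (n : Fin d → ℤ) (j : Fin d),
      u (Function.update n j (n j + ((q j : ℕ) : ℤ)))
        = Complex.exp (2 * (Real.pi : ℂ) * Complex.I * k j) * u n)}

/-- Floquet isospectrality of two real periodic potentials. -/
def FloquetIso {d : ℕ} (q : Fin d → ℕ+) (V Y : (Fin d → ℤ) → ℝ) : Prop :=
  ∀ k : Fin d → ℝ,
    spectrum ℂ (DVmat q (fun n => ((V n : ℝ) : ℂ))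
        (fun j => Complex.exp (2 * (Real.pi : ℂ) * Complex.I * (k j : ℂ))))
      = spectrum ℂ (DVmat q (fun n => ((Y n : ℝ) : ℂ))
        (fun j => Complex.exp (2 * (Real.pi : ℂ) * Complex.I * (k j : ℂ))))

/-- A function on `(ℂ^*)^d` given by a Laurent polynomial. -/
def IsLaurent {d : ℕ} (f : (Fin d → ℂ) → ℂ) : Prop :=
  ∃ c : (Fin d → ℤ) →₀ ℂ, ∀ z : Fin d → ℂ, (∀ j, z j ≠ 0) →
    f z = c.sum fun a C => C * ∏ j, z j ^ a j

/-- A Laurent monomial `C z₁^{a₁} ⋯ z_d^{a_d}` with `C ≠ 0`. -/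
def IsMonomial {d : ℕ} (f : (Fin d → ℂ) → ℂ) : Prop :=
  ∃ (C : ℂ) (a : Fin d → ℤ), C ≠ 0 ∧ ∀ z : Fin d → ℂ, (∀ j, z j ≠ 0) →
    f z = C * ∏ j, z j ^ a j

/-- Irreducibility of a Laurent polynomial: no factorization into two non-monomial
Laurent polynomials. -/
def LaurentIrreducible {d : ℕ} (h : (Fin d → ℂ) → ℂ) : Prop :=
  ¬ ∃ f g : (Fin d → ℂ) → ℂ, IsLaurent f ∧ IsLaurent g ∧
      ¬ IsMonomial f ∧ ¬ IsMonomial g ∧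
      ∀ z : Fin d → ℂ, (∀ j, z j ≠ 0) → h z = f z * g z

namespace St7

lemma rho_ne_zero (q : ℕ+) (m : ℕ) : rho q m ≠ 0 := Complex.exp_ne_zero _

lemma rho_eq_zeta_pow (q : ℕ+) (m : ℕ) :
    rho q m = Complex.exp (2 * (Real.pi:ℂ) * Complex.I / ((q:ℕ):ℂ)) ^ m := by
  rw [← Complex.exp_nat_mul, rho]
  ring_nf

lemma rho_pow_q (q : ℕ+) (m : ℕ) : rho q m ^ ((q:ℕ)) = 1 := by
  have hq : ((q:ℕ):ℂ) ≠ 0 := by exact_mod_cast q.ne_zero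
  rw [rho, ← Complex.exp_nat_mul]
  have : ((q:ℕ):ℂ) * (2 * (Real.pi:ℂ) * Complex.I * (m:ℂ) / ((q:ℕ):ℂ))
      = (m:ℤ) * (2 * (Real.pi:ℂ) * Complex.I) := by
    field_simp
    push_cast
    ring
  rw [this, Complex.exp_int_mul_two_pi_mul_I]

-- coordinate key lemma
lemma coord_key (q : ℕ+) (w : ℂ) (hw : w ≠ 0) (a : ℤ) :
    w ^ a = (w ^ ((q:ℕ))) ^ (a / ((q:ℕ):ℤ)) * w ^ ((a % ((q:ℕ):ℤ)).toNat) := by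
  have hqz : (0:ℤ) < ((q:ℕ):ℤ) := by exact_mod_cast q.pos
  have h1 : a = ((q:ℕ):ℤ) * (a / ((q:ℕ):ℤ)) + a % ((q:ℕ):ℤ) := (Int.mul_ediv_add_emod a _).symm
  have hmod : w ^ (a % ((q:ℕ):ℤ)) = w ^ ((a % ((q:ℕ):ℤ)).toNat) := by
    rw [← zpow_natCast, Int.toNat_of_nonneg (Int.emod_nonneg a (ne_of_gt hqz))]
  conv_lhs => rw [h1]
  rw [zpow_add₀ hw, hmod, zpow_mul, zpow_natCast]

end St7

namespace St7

variable {d : ℕ}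

/-- eigenvector on the fundamental domain -/
def uvec (q : Fin d → ℕ+) (z : Fin d → ℂ) (m n : ∀ j, Fin ((q j : ℕ))) : ℂ :=
  ∏ j, (rho (q j) (m j) * z j) ^ ((n j : ℕ))

/-- eigenvector extended to ℤ^d -/
def em (q : Fin d → ℕ+) (z : Fin d → ℂ) (m : ∀ j, Fin ((q j : ℕ))) (x : Fin d → ℤ) : ℂ :=
  ∏ j, (rho (q j) (m j) * z j) ^ (x j)

lemma w_ne_zero (q : Fin d → ℕ+) (z : Fin d → ℂ) (hz : ∀ j, z j ≠ 0)
    (m : ∀ j, Fin ((q j : ℕ))) (j : Fin d) : rho (q j) (m j) * z j ≠ 0 :=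
  mul_ne_zero (rho_ne_zero _ _) (hz j)

lemma extendBC_em (q : Fin d → ℕ+) (z : Fin d → ℂ) (hz : ∀ j, z j ≠ 0)
    (m : ∀ j, Fin ((q j : ℕ))) (x : Fin d → ℤ) :
    extendBC q (fun j => z j ^ ((q j : ℕ))) (uvec q z m) x = em q z m x := by
  unfold extendBC uvec em
  rw [← Finset.prod_mul_distrib]
  refine (Finset.prod_congr rfl fun j _ => ?_).symm
  have hw := w_ne_zero q z hz m j
  have hcoe : ((fem (q j) (x j) : ℕ)) = (x j % (((q j):ℕ):ℤ)).toNat := rfl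
  rw [hcoe, coord_key (q j) _ hw (x j)]
  congr 2
  rw [mul_pow, rho_pow_q, one_mul]

lemma prod_zpow_update (w : Fin d → ℂ) (hw : ∀ j, w j ≠ 0) (x : Fin d → ℤ) (j : Fin d) (t : ℤ) :
    ∏ i, w i ^ (Function.update x j t i)
      = w j ^ t * (w j ^ (x j))⁻¹ * ∏ i, w i ^ (x i) := by
  rw [← Finset.mul_prod_erase Finset.univ (fun i => w i ^ (Function.update x j t i))
        (Finset.mem_univ j),
      ← Finset.mul_prod_erase Finset.univ (fun i => w i ^ (x i)) (Finset.mem_univ j)]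
  have h2 : ∏ i ∈ Finset.univ.erase j, w i ^ (Function.update x j t i)
      = ∏ i ∈ Finset.univ.erase j, w i ^ (x i) :=
    Finset.prod_congr rfl fun i hi => by
      rw [Function.update_of_ne (Finset.ne_of_mem_erase hi)]
  rw [h2, Function.update_self]
  rw [mul_assoc, ← mul_assoc ((w j ^ (x j))⁻¹),
    inv_mul_cancel₀ (zpow_ne_zero _ (hw j)), one_mul]

lemma discLap_em (q : Fin d → ℕ+) (z : Fin d → ℂ) (hz : ∀ j, z j ≠ 0)
    (m : ∀ j, Fin ((q j : ℕ))) (x : Fin d → ℤ) :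
    discLap (em q z m) x
      = (∑ j, (rho (q j) (m j) * z j + (rho (q j) (m j) * z j)⁻¹)) * em q z m x := by
  unfold discLap em
  set w : Fin d → ℂ := fun j => rho (q j) (m j) * z j with hwdef
  have hw : ∀ j, w j ≠ 0 := fun j => w_ne_zero q z hz m j
  have key : ∀ j : Fin d, ∀ t : ℤ,
      ∏ i, w i ^ (Function.update x j t i)
        = (w j ^ t * (w j ^ (x j))⁻¹) * ∏ i, w i ^ (x i) := by
    intro j t; rw [prod_zpow_update w hw x j t]
  rw [Finset.sum_mul]
  refine Finset.sum_congr rfl fun j _ => ?_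
  rw [key j (x j + 1), key j (x j - 1)]
  have h1 : w j ^ (x j + 1) * (w j ^ (x j))⁻¹ = w j := by
    rw [zpow_add₀ (hw j), zpow_one, mul_comm (w j ^ (x j)), mul_assoc,
      mul_inv_cancel₀ (zpow_ne_zero _ (hw j)), mul_one]
  have h2 : w j ^ (x j - 1) * (w j ^ (x j))⁻¹ = (w j)⁻¹ := by
    rw [sub_eq_add_neg, zpow_add₀ (hw j), zpow_neg, zpow_one, mul_comm (w j ^ (x j)),
      mul_assoc, mul_inv_cancel₀ (zpow_ne_zero _ (hw j)), mul_one]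
  rw [h1, h2]
  ring

end St7

namespace St7

variable {d : ℕ}

def Pmat (q : Fin d → ℕ+) (z : Fin d → ℂ) :
    Matrix (∀ j, Fin ((q j : ℕ))) (∀ j, Fin ((q j : ℕ))) ℂ :=
  fun n m => uvec q z m n

lemma extendBC_eq_sum (q : Fin d → ℕ+) (zz : Fin d → ℂ)
    (u : (∀ j, Fin ((q j : ℕ))) → ℂ) (x : Fin d → ℤ) :
    ∑ n' : (∀ j, Fin ((q j : ℕ))), u n' * extendBC q zz (Pi.single n' 1) x
      = extendBC q zz u x := by
  unfold extendBC
  simp only [Pi.single_apply, mul_ite, mul_one, mul_zero, Finset.sum_ite_eq,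
    Finset.mem_univ, if_true]
  ring

lemma discLap_sum {α : Type*} (s : Finset α) (f : α → (Fin d → ℤ) → ℂ) (x : Fin d → ℤ) :
    discLap (fun n => ∑ a ∈ s, f a n) x = ∑ a ∈ s, discLap (f a) x := by
  unfold discLap
  simp only [← Finset.sum_add_distrib]
  exact Finset.sum_comm

lemma discLap_const_mul (c : ℂ) (u : (Fin d → ℤ) → ℂ) (x : Fin d → ℤ) :
    discLap (fun n => c * u n) x = c * discLap u x := by
  simp [discLap, Finset.mul_sum, mul_add]

lemma DP_eq_PA (q : Fin d → ℕ+) (z : Fin d → ℂ) (hz : ∀ j, z j ≠ 0) :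
    DVmat q (fun _ => 0) (fun j => z j ^ ((q j : ℕ))) * Pmat q z = Pmat q z * Amat q z := by
  ext n m
  rw [Matrix.mul_apply, Amat, Matrix.mul_diagonal]
  have step1 : ∀ n' : (∀ j, Fin ((q j : ℕ))),
      DVmat q (fun _ => 0) (fun j => z j ^ ((q j : ℕ))) n n' * Pmat q z n' m
      = -(discLap (fun y => Pmat q z n' m
            * extendBC q (fun j => z j ^ ((q j : ℕ))) (Pi.single n' 1) y)
          (fun j => ((n j : ℕ) : ℤ))) := by
    intro n'
    rw [discLap_const_mul]
    simp only [DVmat, Pi.zero_apply, zero_mul, add_zero]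
    ring
  rw [Finset.sum_congr rfl fun n' _ => step1 n', Finset.sum_neg_distrib, ← discLap_sum]
  have hfun : (fun y => ∑ n' : (∀ j, Fin ((q j : ℕ))), Pmat q z n' m
        * extendBC q (fun j => z j ^ ((q j : ℕ))) (Pi.single n' 1) y) = em q z m := by
    funext y
    exact (extendBC_eq_sum q _ (uvec q z m) y).trans (extendBC_em q z hz m y)
  rw [hfun, discLap_em q z hz m]
  have hem : em q z m (fun j => ((n j : ℕ) : ℤ)) = Pmat q z n m := by
    simp [em, uvec, Pmat, zpow_natCast]
  rw [hem]
  ring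

end St7

namespace St7

variable {d : ℕ}

lemma rho_sum (Q : ℕ+) (a b : Fin (Q:ℕ)) :
    ∑ k : Fin (Q:ℕ), rho Q ((k:ℕ)) ^ ((a:ℕ)) * (rho Q ((k:ℕ)) ^ ((b:ℕ)))⁻¹
      = if a = b then (((Q:ℕ)):ℂ) else 0 := by
  have hQ : ((Q:ℕ)) ≠ 0 := Q.ne_zero
  set ζ := Complex.exp (2 * (Real.pi:ℂ) * Complex.I / ((Q:ℕ):ℂ)) with hζdef
  have hprim : IsPrimitiveRoot ζ (Q:ℕ) := Complex.isPrimitiveRoot_exp _ hQ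
  have hζ0 : ζ ≠ 0 := Complex.exp_ne_zero _
  have hterm : ∀ k : Fin (Q:ℕ),
      rho Q ((k:ℕ)) ^ ((a:ℕ)) * (rho Q ((k:ℕ)) ^ ((b:ℕ)))⁻¹
        = (ζ ^ (a:ℕ) * (ζ ^ (b:ℕ))⁻¹) ^ (k:ℕ) := by
    intro k
    rw [rho_eq_zeta_pow, ← pow_mul ζ (k:ℕ) (a:ℕ), ← pow_mul ζ (k:ℕ) (b:ℕ),
      mul_comm (k:ℕ) (a:ℕ), mul_comm (k:ℕ) (b:ℕ), pow_mul, pow_mul, ← inv_pow, ← mul_pow]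
  simp only [hterm]
  set y := ζ ^ (a:ℕ) * (ζ ^ (b:ℕ))⁻¹ with hydef
  by_cases hab : a = b
  · subst hab
    have : y = 1 := mul_inv_cancel₀ (pow_ne_zero _ hζ0)
    simp [this]
  · have hy1 : y ≠ 1 := by
      intro h
      exact hab (Fin.ext (hprim.pow_inj a.isLt b.isLt
        ((mul_inv_eq_one₀ (pow_ne_zero _ hζ0)).mp h)))
    have h1 : ∀ c : ℕ, (ζ ^ c) ^ ((Q:ℕ)) = 1 := fun c => by
      rw [← pow_mul, mul_comm, pow_mul, hprim.pow_eq_one, one_pow]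
    have hyQ : y ^ ((Q:ℕ)) = 1 := by
      rw [hydef, mul_pow, h1, inv_pow, h1, inv_one, mul_one]
    rw [if_neg hab, Fin.sum_univ_eq_sum_range (fun k => y ^ k), geom_sum_eq hy1, hyQ,
      sub_self, zero_div]

def Fmat (q : Fin d → ℕ+) :
    Matrix (∀ j, Fin ((q j : ℕ))) (∀ j, Fin ((q j : ℕ))) ℂ :=
  fun n m => ∏ j, rho (q j) (m j) ^ ((n j : ℕ))

def Gmat (q : Fin d → ℕ+) :
    Matrix (∀ j, Fin ((q j : ℕ))) (∀ j, Fin ((q j : ℕ))) ℂ :=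
  fun n m => ∏ j, (rho (q j) (n j) ^ ((m j : ℕ)))⁻¹

lemma FG (q : Fin d → ℕ+) :
    Fmat q * Gmat q = ((∏ j, (((q j):ℕ):ℂ)))
      • (1 : Matrix (∀ j, Fin ((q j : ℕ))) (∀ j, Fin ((q j : ℕ))) ℂ) := by
  ext n m
  rw [Matrix.mul_apply]
  have hent : ∀ k : (∀ j, Fin ((q j : ℕ))), Fmat q n k * Gmat q k m
      = ∏ j, (rho (q j) (k j) ^ ((n j : ℕ)) * (rho (q j) (k j) ^ ((m j : ℕ)))⁻¹) := by
    intro k; rw [Fmat, Gmat, ← Finset.prod_mul_distrib]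
  simp only [hent]
  rw [← Fintype.prod_sum (fun (j : Fin d) (k : Fin ((q j : ℕ))) =>
        rho (q j) ((k:ℕ)) ^ ((n j : ℕ)) * (rho (q j) ((k:ℕ)) ^ ((m j : ℕ)))⁻¹),
      Finset.prod_congr rfl fun j _ => rho_sum (q j) (n j) (m j)]
  by_cases h : n = m
  · subst h; simp [Matrix.one_apply, Matrix.smul_apply]
  · obtain ⟨j, hj⟩ := Function.ne_iff.mp h
    rw [Finset.prod_eq_zero (Finset.mem_univ j) (by simp [hj])]
    simp [Matrix.one_apply, h, Matrix.smul_apply]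

lemma detF_ne_zero (q : Fin d → ℕ+) : Matrix.det (Fmat q) ≠ 0 := by
  intro h
  have hdet := congrArg Matrix.det (FG q)
  rw [Matrix.det_mul, h, zero_mul, Matrix.det_smul, Matrix.det_one, mul_one] at hdet
  have hQ : (∏ j, (((q j):ℕ):ℂ)) ≠ 0 :=
    Finset.prod_ne_zero_iff.mpr fun j _ => by exact_mod_cast (q j).ne_zero
  exact pow_ne_zero _ hQ hdet.symm

lemma Pmat_eq (q : Fin d → ℕ+) (z : Fin d → ℂ) :
    Pmat q z = Matrix.diagonal (fun n : (∀ j, Fin ((q j : ℕ))) => ∏ j, z j ^ ((n j : ℕ)))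
      * Fmat q := by
  ext n m
  rw [Matrix.diagonal_mul]
  show uvec q z m n = _
  rw [uvec, Fmat, ← Finset.prod_mul_distrib]
  exact Finset.prod_congr rfl fun j _ => by rw [mul_pow]; ring

lemma detP_ne_zero (q : Fin d → ℕ+) (z : Fin d → ℂ) (hz : ∀ j, z j ≠ 0) :
    Matrix.det (Pmat q z) ≠ 0 := by
  rw [Pmat_eq q z, Matrix.det_mul, Matrix.det_diagonal]
  refine mul_ne_zero (Finset.prod_ne_zero_iff.mpr fun n _ => ?_) (detF_ne_zero q)
  exact Finset.prod_ne_zero_iff.mpr fun j _ => pow_ne_zero _ (hz j)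

end St7

/-- For the zero potential, for all `z ∈ (ℂ∖{0})^d` and `λ ∈ ℂ`:
`𝒫_0(z₁^{q₁}, …, z_d^{q_d}, λ) = det(A(z) - λI)
  = (-1)^Q ∏_{n ∈ W} ( Σⱼ (ρʲ_{nⱼ} zⱼ + 1/(ρʲ_{nⱼ} zⱼ)) + λ )`. -/
theorem statement7 (d : ℕ) (hd : 1 ≤ d) (q : Fin d → ℕ+)
    (hq : ∀ i j, i ≠ j → Nat.Coprime (q i) (q j))
    (z : Fin d → ℂ) (hz : ∀ j, z j ≠ 0) (lam : ℂ) :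
    scriptP q (fun _ => 0) (fun j => z j ^ ((q j : ℕ))) lam
      = Matrix.det (Amat q z
          - lam • (1 : Matrix (∀ j, Fin ((q j : ℕ))) (∀ j, Fin ((q j : ℕ))) ℂ)) ∧
    Matrix.det (Amat q z
        - lam • (1 : Matrix (∀ j, Fin ((q j : ℕ))) (∀ j, Fin ((q j : ℕ))) ℂ))
      = (-1 : ℂ) ^ (∏ j, (q j : ℕ)) *
          ∏ n : (∀ j, Fin ((q j : ℕ))),
            ((∑ j, (rho (q j) (n j) * z j + (rho (q j) (n j) * z j)⁻¹)) + lam) := by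
  constructor
  · have hP := St7.detP_ne_zero q z hz
    have key : (DVmat q (fun _ => 0) (fun j => z j ^ ((q j : ℕ))) - lam • 1) * St7.Pmat q z
        = St7.Pmat q z * (Amat q z - lam • 1) := by
      rw [Matrix.sub_mul, Matrix.mul_sub, St7.DP_eq_PA q z hz, Matrix.smul_mul,
        Matrix.mul_smul, one_mul, mul_one]
    have hdet := congrArg Matrix.det key
    rw [Matrix.det_mul, Matrix.det_mul, mul_comm (Matrix.det (St7.Pmat q z))] at hdet
    rw [scriptP]
    exact mul_right_cancel₀ hP hdet
  · have hdiag : Amat q z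
          - lam • (1 : Matrix (∀ j, Fin ((q j : ℕ))) (∀ j, Fin ((q j : ℕ))) ℂ)
        = Matrix.diagonal (fun n : (∀ j, Fin ((q j : ℕ))) =>
            -((∑ j, (rho (q j) (n j) * z j + (rho (q j) (n j) * z j)⁻¹)) + lam)) := by
      ext n m
      by_cases h : n = m
      · subst h
        simp [Amat, Matrix.sub_apply, Matrix.smul_apply, Matrix.one_apply,
          Matrix.diagonal_apply_eq]
        ring
      · simp [Amat, Matrix.sub_apply, Matrix.smul_apply, Matrix.one_apply, h,
          Matrix.diagonal_apply_ne _ h]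
    rw [hdiag, Matrix.det_diagonal,
      Finset.prod_congr rfl (fun n _ => neg_eq_neg_one_mul _), Finset.prod_mul_distrib,
      Finset.prod_const]
    congr 2
    simp [Finset.card_univ]

end
end

section
/- Let ρ_1,…,ρ_d be nonzero complex numbers and λ∈ℂ. If d≥3, then the Laurent polynomial Σ_{j=1}^d ( ρ_j z_j + 1/(ρ_j z_j) ) + λ in the variables z_1,…,z_d is irreducible. If d=2 and λ≠0, then ρ_1 z_1 + 1/(ρ_1 z_1) + ρ_2 z_2 + 1/(ρ_2 z_2) + λ is irreducible. -/
noncomputable section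

/-!
A factorisation `P = f g` on the torus lifts to the group algebra `ℂ[ℤᵈ]`, because distinct
characters of `(ℂˣ)ᵈ` are linearly independent. Grade `ℂ[ℤᵈ]` by the exponent of `z₁`: `P` has
degrees `-1, 0, 1`, with the monomials `ρ₁ z₁` and `(ρ₁ z₁)⁻¹` as extreme components. Extreme
components of a product are the products of the extreme components, and in `ℂ[ℤᵈ]` only monomials
divide a monomial; so the extreme components of `f` and `g` are monomials and their `z₁`-widths
add up to `2`. A factor of width `0` would be a monomial, hence both factors have width `1`, are
binomials, and `P` has at most `4` monomials. But `P` has the `2d` monomials `(ρⱼ zⱼ)^{±1}`, and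
also `λ` when `λ ≠ 0`.
-/

open AddMonoidAlgebra Finset
open scoped Pointwise

namespace AddMonoidAlgebra

section Slice

variable {R G : Type*} [Semiring R] [AddMonoid G] (π : G →+ ℤ)

def slice (n : ℤ) : R[G] →+ R[G] :=
  coeffAddEquiv.symm.toAddMonoidHom.comp
    ((Finsupp.filterAddHom (π · = n)).comp (coeffAddEquiv (R := R) (M := G)).toAddMonoidHom)

variable {π} {n : ℤ} {x y : R[G]}

theorem coeff_slice : (slice π n x).coeff = x.coeff.filter (π · = n) := rfl

theorem support_slice : (slice π n x).coeff.support = x.coeff.support.filter (π · = n) := by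
  rw [coeff_slice, Finsupp.support_filter]

theorem eq_of_mem_support_slice {a : G} (ha : a ∈ (slice π n x).coeff.support) : π a = n := by
  rw [support_slice, mem_filter] at ha
  exact ha.2

theorem support_slice_subset : (slice π n x).coeff.support ⊆ x.coeff.support :=
  support_slice.trans_subset (filter_subset _ _)

theorem slice_single (a : G) (r : R) :
    slice π n (single a r) = if π a = n then single a r else 0 := by
  split_ifs with h <;> ext b <;> by_cases hb : a = b <;> simp_all [coeff_slice]

theorem slice_eq_self (h : ∀ a ∈ x.coeff.support, π a = n) : slice π n x = x := by
  rw [← coeff_inj, coeff_slice, Finsupp.filter_eq_self_iff]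
  exact fun a ha => h a (Finsupp.mem_support_iff.2 ha)

theorem slice_eq_zero (h : ∀ a ∈ x.coeff.support, π a ≠ n) : slice π n x = 0 := by
  rw [← coeff_inj, coeff_slice, coeff_zero, Finsupp.filter_eq_zero_iff]
  exact fun a hn => Finsupp.notMem_support_iff.1 fun ha => h a ha hn

theorem forall_mem_support_mul {p : G → Prop}
    (h : ∀ a ∈ x.coeff.support, ∀ b ∈ y.coeff.support, p (a + b)) :
    ∀ c ∈ (x * y).coeff.support, p c := by
  classical
  intro c hc
  obtain ⟨a, ha, b, hb, rfl⟩ := mem_add.1 (support_coeff_mul_subset x y hc)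
  exact h a ha b hb

theorem slice_mul_of_le {M N : ℤ} (hx : ∀ a ∈ x.coeff.support, π a ≤ M)
    (hy : ∀ b ∈ y.coeff.support, π b ≤ N) :
    slice π (M + N) (x * y) = slice π M x * slice π N y := by
  set x' := ofCoeff (x.coeff.filter (π · ≠ M))
  set y' := ofCoeff (y.coeff.filter (π · ≠ N))
  have hx' : slice π M x + x' = x := by
    rw [← coeff_inj]; exact Finsupp.filter_add_filter_not _ _
  have hy' : slice π N y + y' = y := by
    rw [← coeff_inj]; exact Finsupp.filter_add_filter_not _ _
  have hx'lt : ∀ a ∈ x'.coeff.support, π a < M := fun a ha => by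
    simp only [x', Finsupp.support_filter, mem_filter] at ha
    exact lt_of_le_of_ne (hx a ha.1) ha.2
  have hy'lt : ∀ b ∈ y'.coeff.support, π b < N := fun b hb => by
    simp only [y', Finsupp.support_filter, mem_filter] at hb
    exact lt_of_le_of_ne (hy b hb.1) hb.2
  have hsplit : x * y = slice π M x * slice π N y + (slice π M x * y' + x' * y) := by
    rw [← add_assoc, ← mul_add, hy', ← add_mul, hx']
  rw [hsplit, map_add, map_add]
  rw [slice_eq_self (forall_mem_support_mul fun a ha b hb => by
    rw [map_add, eq_of_mem_support_slice ha, eq_of_mem_support_slice hb])]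
  rw [slice_eq_zero (forall_mem_support_mul fun a ha b hb => by
    have := hy'lt b hb; rw [map_add, eq_of_mem_support_slice ha]; omega)]
  rw [slice_eq_zero (forall_mem_support_mul fun a ha b hb => by
    have := hx'lt a ha; have := hy b hb; rw [map_add]; omega)]
  simp

def topDegree (π : G →+ ℤ) (x : R[G]) : ℤ :=
  if h : x.coeff.support.Nonempty then x.coeff.support.sup' h π else 0

theorem le_topDegree {a : G} (ha : a ∈ x.coeff.support) : π a ≤ topDegree π x := by
  rw [topDegree, dif_pos ⟨a, ha⟩]
  exact le_sup' π ha

theorem slice_topDegree_ne_zero (hx : x ≠ 0) : slice π (topDegree π x) x ≠ 0 := by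
  have hne : x.coeff.support.Nonempty := Finsupp.support_nonempty_iff.2 (coeff_eq_zero.not.2 hx)
  obtain ⟨a, ha, hmax⟩ := exists_mem_eq_sup' hne π
  have hmem : a ∈ (slice π (topDegree π x) x).coeff.support := by
    rw [support_slice, mem_filter, topDegree, dif_pos hne]
    exact ⟨ha, hmax.symm⟩
  rintro h
  simp [h] at hmem

theorem topDegree_eq_of_le (h : ∀ a ∈ x.coeff.support, π a ≤ n) (hn : slice π n x ≠ 0) :
    topDegree π x = n := by
  obtain ⟨a, ha⟩ := Finsupp.support_nonempty_iff.2 (coeff_eq_zero.not.2 hn)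
  have hax : a ∈ x.coeff.support := by
    rw [support_slice, mem_filter] at ha
    exact ha.1
  refine le_antisymm ?_ (eq_of_mem_support_slice ha ▸ le_topDegree hax)
  rw [topDegree, dif_pos ⟨a, hax⟩]
  exact sup'_le _ _ h

theorem slice_topDegree_mul : slice π (topDegree π x + topDegree π y) (x * y)
    = slice π (topDegree π x) x * slice π (topDegree π y) y :=
  slice_mul_of_le (fun _ => le_topDegree) (fun _ => le_topDegree)

theorem topDegree_mul [NoZeroDivisors R] [UniqueSums G] (hx : x ≠ 0) (hy : y ≠ 0) :
    topDegree π (x * y) = topDegree π x + topDegree π y :=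
  topDegree_eq_of_le
    (forall_mem_support_mul fun _ ha _ hb => by
      rw [map_add]; exact add_le_add (le_topDegree ha) (le_topDegree hb))
    (by rw [slice_topDegree_mul]
        exact mul_ne_zero (slice_topDegree_ne_zero hx) (slice_topDegree_ne_zero hy))

theorem neg_topDegree_neg_le {a : G} (ha : a ∈ x.coeff.support) : -topDegree (-π) x ≤ π a := by
  have := le_topDegree (π := -π) ha
  rw [AddMonoidHom.neg_apply] at this
  omega

theorem one_le_topDegree_add_topDegree_neg (hx : 1 < #x.coeff.support)
    (htop : #(slice π (topDegree π x) x).coeff.support = 1) :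
    1 ≤ topDegree π x + topDegree (-π) x := by
  by_contra! hw
  have hflat : slice π (topDegree π x) x = x := slice_eq_self fun a ha => by
    have := le_topDegree (π := π) ha
    have := neg_topDegree_neg_le (π := π) ha
    omega
  rw [hflat] at htop
  omega

theorem card_support_le_of_topDegree_add_topDegree_neg_le_one
    (hw : topDegree π x + topDegree (-π) x ≤ 1) :
    #x.coeff.support ≤ #(slice π (topDegree π x) x).coeff.support
      + #(slice (-π) (topDegree (-π) x) x).coeff.support := by
  classical
  refine (card_le_card fun a ha => ?_).trans (card_union_le _ _)
  have := le_topDegree (π := π) ha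
  have := neg_topDegree_neg_le (π := π) ha
  rw [mem_union, support_slice, support_slice, mem_filter, mem_filter, AddMonoidHom.neg_apply]
  simp only [ha, true_and]
  omega

end Slice

section Factor

variable {R G : Type*} [Semiring R] [NoZeroDivisors R] [AddMonoid G] [TwoUniqueSums G]
  {x y : R[G]}

theorem card_support_eq_one_of_mul (h : #(x * y).coeff.support = 1) :
    #x.coeff.support = 1 ∧ #y.coeff.support = 1 := by
  have hxy : x * y ≠ 0 := fun h0 => by simp [h0] at h
  have hx : 0 < #x.coeff.support := card_pos.2 <| Finsupp.support_nonempty_iff.2 <|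
    coeff_eq_zero.not.2 (left_ne_zero_of_mul hxy)
  have hy : 0 < #y.coeff.support := card_pos.2 <| Finsupp.support_nonempty_iff.2 <|
    coeff_eq_zero.not.2 (right_ne_zero_of_mul hxy)
  suffices #x.coeff.support * #y.coeff.support ≤ 1 by
    constructor <;> nlinarith
  by_contra! hlt
  -- Two distinct pairs with unique sums give two distinct monomials of `x * y`.
  obtain ⟨p, hp, q, hq, hpq, hpu, hqu⟩ := TwoUniqueSums.uniqueAdd_of_one_lt_card hlt
  have hmem : ∀ {r : G × G}, r ∈ x.coeff.support ×ˢ y.coeff.support →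
      UniqueAdd x.coeff.support y.coeff.support r.1 r.2 → r.1 + r.2 ∈ (x * y).coeff.support :=
    fun hr hu => by
      rw [mem_product] at hr
      rw [Finsupp.mem_support_iff, coeff_mul_add_of_uniqueAdd hu]
      exact mul_ne_zero (Finsupp.mem_support_iff.1 hr.1) (Finsupp.mem_support_iff.1 hr.2)
  have hne : p.1 + p.2 ≠ q.1 + q.2 := fun he =>
    hpq (Prod.ext_iff.2 (hpu (mem_product.1 hq).1 (mem_product.1 hq).2 he.symm)).symm
  have := one_lt_card.2 ⟨_, hmem hp hpu, _, hmem hq hqu, hne⟩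
  omega

theorem card_support_slice_topDegree_eq_one (σ : G →+ ℤ)
    (h : ∀ a ∈ (x * y).coeff.support, σ a ≤ 1) (h1 : #(slice σ 1 (x * y)).coeff.support = 1) :
    topDegree σ x + topDegree σ y = 1 ∧ #(slice σ (topDegree σ x) x).coeff.support = 1 ∧
      #(slice σ (topDegree σ y) y).coeff.support = 1 := by
  have hne : slice σ 1 (x * y) ≠ 0 := fun h0 => by simp [h0] at h1
  have hxy : x * y ≠ 0 := fun h0 => hne (by rw [h0, map_zero])
  have hsum : topDegree σ x + topDegree σ y = 1 := by
    rw [← topDegree_mul (left_ne_zero_of_mul hxy) (right_ne_zero_of_mul hxy)]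
    exact topDegree_eq_of_le h hne
  refine ⟨hsum, card_support_eq_one_of_mul ?_⟩
  rw [← slice_topDegree_mul, hsum]
  exact h1

theorem card_support_mul_le_four (π : G →+ ℤ)
    (hx : 1 < #x.coeff.support) (hy : 1 < #y.coeff.support)
    (hle : ∀ a ∈ (x * y).coeff.support, |π a| ≤ 1)
    (htop : #(slice π 1 (x * y)).coeff.support = 1)
    (hbot : #(slice (-π) 1 (x * y)).coeff.support = 1) :
    #(x * y).coeff.support ≤ 4 := by
  classical
  obtain ⟨hT, hTx, hTy⟩ :=
    card_support_slice_topDegree_eq_one π (fun a ha => (abs_le.1 (hle a ha)).2) htop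
  obtain ⟨hB, hBx, hBy⟩ := card_support_slice_topDegree_eq_one (-π) (fun a ha => by
    rw [AddMonoidHom.neg_apply, neg_le]; exact (abs_le.1 (hle a ha)).1) hbot
  have hwx := one_le_topDegree_add_topDegree_neg hx hTx
  have hwy := one_le_topDegree_add_topDegree_neg hy hTy
  have hx2 := card_support_le_of_topDegree_add_topDegree_neg_le_one (π := π) (x := x) (by omega)
  have hy2 := card_support_le_of_topDegree_add_topDegree_neg_le_one (π := π) (x := y) (by omega)
  rw [hTx, hBx] at hx2
  rw [hTy, hBy] at hy2
  calc #(x * y).coeff.support ≤ #(x.coeff.support + y.coeff.support) :=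
        card_le_card (support_coeff_mul_subset x y)
    _ ≤ #x.coeff.support * #y.coeff.support := card_add_le
    _ ≤ 2 * 2 := Nat.mul_le_mul hx2 hy2

end Factor

end AddMonoidAlgebra

section Torus

variable {d : ℕ}

def torusChar (a : Fin d → ℤ) : (Fin d → ℂˣ) →* ℂ where
  toFun w := ∏ j, (w j : ℂ) ^ a j
  map_one' := by simp
  map_mul' w v := by simp only [Pi.mul_apply, Units.val_mul, mul_zpow, prod_mul_distrib]

theorem torusChar_injective : Function.Injective (torusChar (d := d)) := by
  intro a b hab
  funext j
  have h := DFunLike.congr_fun hab (Pi.mulSingle j (Units.mk0 2 two_ne_zero))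
  have hev : ∀ c : Fin d → ℤ, torusChar c (Pi.mulSingle j (Units.mk0 2 two_ne_zero))
      = (((2 : ℝ) ^ c j : ℝ) : ℂ) := by
    intro c
    rw [torusChar, MonoidHom.coe_mk, OneHom.coe_mk, prod_eq_single j]
    · simp
    · intro i _ hi
      simp [Pi.mulSingle_eq_of_ne hi]
    · simp
  rw [hev, hev, Complex.ofReal_inj] at h
  exact zpow_right_injective₀ (by norm_num) (by norm_num) h

def evalTorus (w : Fin d → ℂˣ) : ℂ[Fin d → ℤ] →ₐ[ℂ] ℂ :=
  lift ℂ ℂ (Fin d → ℤ)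
    { toFun a := torusChar a.toAdd w
      map_one' := by simp [torusChar]
      map_mul' a b := by
        simp only [torusChar, MonoidHom.coe_mk, OneHom.coe_mk, toAdd_mul, Pi.add_apply,
          zpow_add₀ (Units.ne_zero _), prod_mul_distrib] }

theorem evalTorus_apply (w : Fin d → ℂˣ) (x : ℂ[Fin d → ℤ]) :
    evalTorus w x = x.coeff.sum fun a r => r * ∏ j, (w j : ℂ) ^ a j := by
  rw [evalTorus, lift_apply]
  rfl

theorem eq_zero_of_forall_evalTorus_eq_zero {x : ℂ[Fin d → ℤ]} (h : ∀ w, evalTorus w x = 0) :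
    x = 0 := by
  have hc : Finsupp.linearCombination ℂ (⇑) (x.coeff.mapDomain torusChar) = 0 := by
    rw [Finsupp.linearCombination_mapDomain]
    funext w
    simpa [evalTorus_apply, Finsupp.linearCombination_apply, Finsupp.sum, torusChar] using h w
  have := linearIndependent_iff.1 (linearIndependent_monoidHom (Fin d → ℂˣ) ℂ) _ hc
  rw [← coeff_eq_zero]
  exact Finsupp.mapDomain_injective torusChar_injective (by rw [this, Finsupp.mapDomain_zero])

end Torus

section FermiPoly

variable {d : ℕ}

def fermiPoly (ρ : Fin d → ℂ) (lam : ℂ) : ℂ[Fin d → ℤ] :=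
  ∑ j, (single (Pi.single j 1) (ρ j) + single (-Pi.single j 1) (ρ j)⁻¹) + single 0 lam

theorem evalTorus_single (w : Fin d → ℂˣ) (a : Fin d → ℤ) (r : ℂ) :
    evalTorus w (single a r) = r * ∏ j, (w j : ℂ) ^ a j := by
  rw [evalTorus_apply, coeff_single, Finsupp.sum_single_index (zero_mul _)]

theorem evalTorus_fermiPoly (ρ : Fin d → ℂ) (lam : ℂ) (w : Fin d → ℂˣ) :
    evalTorus w (fermiPoly ρ lam) = ∑ j, (ρ j * w j + (ρ j * w j)⁻¹) + lam := by
  simp [fermiPoly, evalTorus_single, Pi.single_apply, mul_comm]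

theorem slice_fermiPoly (ρ : Fin d → ℂ) (lam : ℂ) (k : Fin d) :
    slice (Pi.evalAddMonoidHom (fun _ => ℤ) k) 1 (fermiPoly ρ lam)
      = single (Pi.single k 1) (ρ k) := by
  simp [fermiPoly, slice_single, Pi.single_apply, apply_ite (fun t : ℤ => -t), ite_eq_iff]

theorem slice_neg_fermiPoly (ρ : Fin d → ℂ) (lam : ℂ) (k : Fin d) :
    slice (-Pi.evalAddMonoidHom (fun _ => ℤ) k) 1 (fermiPoly ρ lam)
      = single (-Pi.single k 1) (ρ k)⁻¹ := by
  simp [fermiPoly, slice_single, Pi.single_apply, apply_ite (fun t : ℤ => -t), ite_eq_iff]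

theorem coeff_fermiPoly_zero (ρ : Fin d → ℂ) (lam : ℂ) : (fermiPoly ρ lam).coeff 0 = lam := by
  simp [fermiPoly, coeff_single]

theorem abs_le_one_of_mem_support_fermiPoly (ρ : Fin d → ℂ) (lam : ℂ) {a : Fin d → ℤ}
    (ha : a ∈ (fermiPoly ρ lam).coeff.support) (k : Fin d) : |a k| ≤ 1 := by
  let S : Set (Fin d → ℤ) := {a | ∀ k, |a k| ≤ 1}
  have hsingle : ∀ b (r : ℂ), b ∈ S → single b r ∈ supported ℂ ℂ S := fun b r hb =>
    mem_supported.2 fun c hc => by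
      rw [coeff_single] at hc
      rwa [mem_singleton.1 (Finsupp.support_single_subset hc)]
  have hmem : fermiPoly ρ lam ∈ supported ℂ ℂ S := by
    refine add_mem (sum_mem fun j _ => add_mem (hsingle _ _ ?_) (hsingle _ _ ?_))
      (hsingle _ _ ?_) <;> intro k <;>
      simp only [Pi.single_apply, Pi.neg_apply, Pi.zero_apply] <;> (try split_ifs) <;> simp
  exact mem_supported.1 hmem ha k

theorem two_mul_add_le_card_support_fermiPoly {ρ : Fin d → ℂ} (hρ : ∀ j, ρ j ≠ 0) (lam : ℂ) :
    2 * d + (if lam = 0 then 0 else 1) ≤ #(fermiPoly ρ lam).coeff.support := by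
  set E := univ.image fun j : Fin d => (Pi.single j 1 : Fin d → ℤ)
  set E' := univ.image fun j : Fin d => -(Pi.single j 1 : Fin d → ℤ)
  have hinj : Function.Injective fun j : Fin d => (Pi.single j 1 : Fin d → ℤ) :=
    fun i j h => by simpa [Pi.single_apply] using congrFun h i
  have hcard : #(E ∪ E') = 2 * d := by
    rw [card_union_of_disjoint, card_image_of_injective _ hinj,
      card_image_of_injective _ (f := fun j : Fin d => -(Pi.single j 1 : Fin d → ℤ))
        (neg_injective.comp hinj), card_univ, Fintype.card_fin, two_mul]
    refine disjoint_left.2 fun a ha ha' => ?_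
    obtain ⟨i, -, rfl⟩ := mem_image.1 ha
    obtain ⟨j, -, hj⟩ := mem_image.1 ha'
    simpa [Pi.single_apply, apply_ite, ite_eq_iff] using congrFun hj i
  have hsub : E ∪ E' ⊆ (fermiPoly ρ lam).coeff.support := by
    intro a ha
    rcases mem_union.1 ha with ha | ha <;> obtain ⟨k, -, rfl⟩ := mem_image.1 ha
    · refine support_slice_subset (π := Pi.evalAddMonoidHom _ k) (n := 1) ?_
      rw [slice_fermiPoly, coeff_single, Finsupp.support_single _ (hρ k)]
      exact mem_singleton_self _
    · refine support_slice_subset (π := -Pi.evalAddMonoidHom _ k) (n := 1) ?_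
      rw [slice_neg_fermiPoly, coeff_single, Finsupp.support_single _ (inv_ne_zero (hρ k))]
      exact mem_singleton_self _
  split_ifs with hlam
  · exact hcard ▸ card_le_card hsub
  · have h0 : (0 : Fin d → ℤ) ∉ E ∪ E' := fun h => by
      rcases mem_union.1 h with h | h <;> obtain ⟨k, -, hk⟩ := mem_image.1 h <;>
        simpa using congrFun hk k
    rw [← hcard, ← card_insert_of_notMem h0]
    refine card_le_card (insert_subset ?_ hsub)
    rw [Finsupp.mem_support_iff, coeff_fermiPoly_zero]
    exact hlam

end FermiPoly

section Laurent

variable {d : ℕ} {f : (Fin d → ℂ) → ℂ} {c : (Fin d → ℤ) →₀ ℂ}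

theorem evalTorus_ofCoeff
    (hf : ∀ z : Fin d → ℂ, (∀ j, z j ≠ 0) → f z = c.sum fun a C => C * ∏ j, z j ^ a j)
    (w : Fin d → ℂˣ) : evalTorus w (ofCoeff c) = f fun j => w j := by
  rw [evalTorus_apply, coeff_ofCoeff, hf _ fun j => (w j).ne_zero]

theorem one_lt_card_support_of_not_isMonomial
    (hf : ∀ z : Fin d → ℂ, (∀ j, z j ≠ 0) → f z = c.sum fun a C => C * ∏ j, z j ^ a j)
    (hfm : ¬ IsMonomial f) (hc : c ≠ 0) : 1 < #c.support := by
  have hpos : 0 < #c.support := card_pos.2 (Finsupp.support_nonempty_iff.2 hc)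
  have hne : #c.support ≠ 1 := fun h1 => hfm <| by
    obtain ⟨a, r, hr, rfl⟩ := Finsupp.card_support_eq_one'.1 h1
    exact ⟨r, a, hr, fun z hz => by rw [hf z hz, Finsupp.sum_single_index (zero_mul _)]⟩
  omega

theorem laurentIrreducible_of_four_lt_card {ρ : Fin d → ℂ} (hρ : ∀ j, ρ j ≠ 0) {lam : ℂ}
    (hd : 0 < d) (hP : 4 < #(fermiPoly ρ lam).coeff.support) :
    LaurentIrreducible (fun z : Fin d → ℂ => (∑ j, (ρ j * z j + (ρ j * z j)⁻¹)) + lam) := by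
  rintro ⟨f, g, ⟨cf, hf⟩, ⟨cg, hg⟩, hfm, hgm, hfg⟩
  have hmul : ofCoeff cf * ofCoeff cg = fermiPoly ρ lam := sub_eq_zero.1 <|
    eq_zero_of_forall_evalTorus_eq_zero fun w => by
      rw [map_sub, map_mul, evalTorus_ofCoeff hf, evalTorus_ofCoeff hg, evalTorus_fermiPoly,
        sub_eq_zero]
      exact (hfg _ fun j => (w j).ne_zero).symm
  have hP0 : fermiPoly ρ lam ≠ 0 := fun h => by simp [h] at hP
  have hcf := one_lt_card_support_of_not_isMonomial hf hfm fun h => hP0 <| by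
    rw [← hmul, h, ofCoeff_zero, zero_mul]
  have hcg := one_lt_card_support_of_not_isMonomial hg hgm fun h => hP0 <| by
    rw [← hmul, h, ofCoeff_zero, mul_zero]
  have := card_support_mul_le_four (Pi.evalAddMonoidHom (fun _ => ℤ) ⟨0, hd⟩) hcf hcg
    (fun a ha => abs_le_one_of_mem_support_fermiPoly ρ lam (hmul ▸ ha) _)
    (by rw [hmul, slice_fermiPoly, coeff_single, Finsupp.support_single _ (hρ _), card_singleton])
    (by rw [hmul, slice_neg_fermiPoly, coeff_single, Finsupp.support_single _ (inv_ne_zero (hρ _)),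
      card_singleton])
  rw [hmul] at this
  omega

end Laurent

/-- Let `ρ₁, …, ρ_d` be nonzero complex numbers and `λ ∈ ℂ`.
If `d ≥ 3`, the Laurent polynomial `Σⱼ (ρⱼ zⱼ + 1/(ρⱼ zⱼ)) + λ` is irreducible.
If `d = 2` and `λ ≠ 0`, then `ρ₁ z₁ + 1/(ρ₁ z₁) + ρ₂ z₂ + 1/(ρ₂ z₂) + λ`
is irreducible. -/
theorem statement8 (d : ℕ) (ρ : Fin d → ℂ) (hρ : ∀ j, ρ j ≠ 0) (lam : ℂ) :
    (3 ≤ d →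
      LaurentIrreducible (fun z : Fin d → ℂ =>
        (∑ j, (ρ j * z j + (ρ j * z j)⁻¹)) + lam)) ∧
    (d = 2 → lam ≠ 0 →
      LaurentIrreducible (fun z : Fin d → ℂ =>
        (∑ j, (ρ j * z j + (ρ j * z j)⁻¹)) + lam)) := by
  have hcard := two_mul_add_le_card_support_fermiPoly hρ lam
  refine ⟨fun hd => laurentIrreducible_of_four_lt_card hρ (by omega) ?_,
    fun hd hlam => laurentIrreducible_of_four_lt_card hρ (by omega) ?_⟩
  · split_ifs at hcard <;> omega
  · rw [if_neg hlam] at hcard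
    omega

end
end
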